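/- Let Γ = (ω^ω, E) be a graph on the Baire space with E closed in ω^ω × ω^ω, 𝔭 a coloring with 𝔭(η) depending only on η(0), and G = G(Γ, 𝔭). Then the restriction homomorphisms π_n : G → G_n (0 < n < ω) jointly separate points: for every g ∈ G with g ≠ e there exists 0 < n < ω such that π_n(g) ≠ e; equivalently, ⋂_{0 < n < ω} ker(π_n) = {e}. -/

import Mathlib

/-- The defining relations of the graph product of cyclic groups `G(Γ, 𝔭)`:
for each vertex `a` the relation `a ^ 𝔭(a) = 1` (where the value `𝔭(a) = 0`
encodes `∞`, i.e. no relation), and for each edge `a E b` the commutator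
relation `a b a⁻¹ b⁻¹ = 1`. -/
def graphProdRels {V : Type*} (E : V → V → Prop) (p : V → ℕ) : Set (FreeGroup V) :=
  {w | ∃ a : V, w = FreeGroup.of a ^ p a} ∪
  {w | ∃ a b : V, E a b ∧
    w = FreeGroup.of a * FreeGroup.of b * (FreeGroup.of a)⁻¹ * (FreeGroup.of b)⁻¹}

/-- The graph product of cyclic groups `G(Γ, 𝔭)`. -/
abbrev GraphProd {V : Type*} (E : V → V → Prop) (p : V → ℕ) : Type _ :=
  PresentedGroup (graphProdRels E p)

/-- The generator of `G(Γ, 𝔭)` corresponding to the vertex `v`. -/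
def GraphProd.gen {V : Type*} (E : V → V → Prop) (p : V → ℕ) (v : V) : GraphProd E p :=
  PresentedGroup.of v

/-- The restriction `η ↾ n ∈ ω^n` of `η ∈ ω^ω`. -/
def res (n : ℕ) (η : ℕ → ℕ) : Fin n → ℕ := fun i => η i

/-- The edge relation `E_n` on `ω^n`: two sequences are adjacent iff they have
`E`-adjacent extensions in the Baire space. -/
def En (E : (ℕ → ℕ) → (ℕ → ℕ) → Prop) (n : ℕ) : (Fin n → ℕ) → (Fin n → ℕ) → Prop :=
  fun η ν => ∃ η' ν' : ℕ → ℕ, E η' ν' ∧ res n η' = η ∧ res n ν' = ν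

/-- The coloring `𝔭_n` on `ω^n`, given by `𝔭_n(η) = 𝔭(η')` for an extension
`η'` of `η` (well defined for `n ≥ 1` when `𝔭(η)` depends only on `η(0)`). -/
def pn (p : (ℕ → ℕ) → ℕ) (n : ℕ) : (Fin n → ℕ) → ℕ :=
  fun η => p fun k => if h : k < n then η ⟨k, h⟩ else 0

/-!
A nontrivial `g ∈ G(Γ, 𝔭)` is a word in finitely many generators `S`. Since `E` is closed,
at a large enough level `n` the restriction `η ↦ η ↾ n` is injective on `S` and `E_n`
relates the restrictions of two distinct points of `S` only if they are `E`-adjacent; as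
`𝔭` only depends on the first coordinate, also `𝔭_n(η ↾ n) = 𝔭(η)`. Hence `η ↾ n ↦ η`
(and all other generators `↦ e`) defines a homomorphism `ψ : G_n → G` with `ψ ∘ π_n`
fixing `g`, so `π_n(g) ≠ e`.
-/

open Filter Topology

namespace GraphProd

variable {V : Type*} {E : V → V → Prop} {p : V → ℕ}

theorem gen_pow_eq_one (a : V) : gen E p a ^ p a = 1 := by
  have h := PresentedGroup.one_of_mem (rels := graphProdRels E p) (x := FreeGroup.of a ^ p a)
    (Or.inl ⟨a, rfl⟩)
  rwa [map_pow] at h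

theorem commute_gen {a b : V} (h : E a b) : Commute (gen E p a) (gen E p b) := by
  have hcomm := PresentedGroup.one_of_mem (rels := graphProdRels E p)
    (x := FreeGroup.of a * FreeGroup.of b * (FreeGroup.of a)⁻¹ * (FreeGroup.of b)⁻¹)
    (Or.inr ⟨a, b, h, rfl⟩)
  simp only [map_mul, map_inv] at hcomm
  exact commutatorElement_eq_one_iff_mul_comm.mp hcomm

variable {H : Type*} [Group H]

def lift (f : V → H) (hpow : ∀ a, f a ^ p a = 1)
    (hcomm : ∀ a b, E a b → Commute (f a) (f b)) : GraphProd E p →* H :=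
  PresentedGroup.toGroup (f := f) <| by
    rintro r (⟨a, rfl⟩ | ⟨a, b, hab, rfl⟩)
    · rw [map_pow, FreeGroup.lift_apply_of, hpow]
    · simp only [map_mul, map_inv, FreeGroup.lift_apply_of, (hcomm a b hab).eq,
        mul_inv_cancel_right, mul_inv_cancel]

theorem lift_gen (f : V → H) (hpow : ∀ a, f a ^ p a = 1)
    (hcomm : ∀ a b, E a b → Commute (f a) (f b)) (a : V) :
    lift f hpow hcomm (gen E p a) = f a :=
  PresentedGroup.toGroup.of _

theorem exists_finite_mem_closure_gen (g : GraphProd E p) :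
    ∃ S : Set V, S.Finite ∧ g ∈ Subgroup.closure (gen E p '' S) := by
  have hg : g ∈ Subgroup.closure (Set.range (gen E p)) :=
    (PresentedGroup.closure_range_of _).ge (Subgroup.mem_top g)
  induction hg using Subgroup.closure_induction with
  | mem _ hx =>
    obtain ⟨a, rfl⟩ := hx
    exact ⟨{a}, Set.finite_singleton a, Subgroup.subset_closure ⟨a, rfl, rfl⟩⟩
  | one => exact ⟨∅, Set.finite_empty, one_mem _⟩
  | mul _ _ _ _ hx hy =>
    obtain ⟨S, hS, hxS⟩ := hx
    obtain ⟨T, hT, hyT⟩ := hy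
    exact ⟨S ∪ T, hS.union hT, mul_mem
      (Subgroup.closure_mono (Set.image_mono Set.subset_union_left) hxS)
      (Subgroup.closure_mono (Set.image_mono Set.subset_union_right) hyT)⟩
  | inv _ _ hx =>
    obtain ⟨S, hS, hxS⟩ := hx
    exact ⟨S, hS, inv_mem hxS⟩

theorem exists_retraction {W : Type*} {E' : W → W → Prop} {p' : W → ℕ} (φ : V → W)
    {S : Set V} (hinj : S.InjOn φ) (hp : ∀ a ∈ S, p' (φ a) = p a)
    (hE : ∀ a ∈ S, ∀ b ∈ S, E' (φ a) (φ b) → a = b ∨ E a b) :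
    ∃ ψ : GraphProd E' p' →* GraphProd E p, ∀ a ∈ S, ψ (gen E' p' (φ a)) = gen E p a := by
  classical
  obtain ⟨f, hf, hf_one⟩ : ∃ f : W → GraphProd E p,
      (∀ a ∈ S, f (φ a) = gen E p a) ∧ ∀ w ∉ φ '' S, f w = 1 := by
    refine ⟨fun w => if h : w ∈ φ '' S then gen E p h.choose else 1, fun a ha => ?_,
      fun w hw => dif_neg hw⟩
    have h : φ a ∈ φ '' S := Set.mem_image_of_mem φ ha
    simp only [dif_pos h]
    exact congrArg _ (hinj h.choose_spec.1 ha h.choose_spec.2)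
  have hpow : ∀ w, f w ^ p' w = 1 := by
    intro w
    by_cases hw : w ∈ φ '' S
    · obtain ⟨a, ha, rfl⟩ := hw
      rw [hf a ha, hp a ha, gen_pow_eq_one]
    · rw [hf_one w hw, one_pow]
  have hcomm : ∀ v w, E' v w → Commute (f v) (f w) := by
    intro v w hvw
    by_cases hv : v ∈ φ '' S
    · by_cases hw : w ∈ φ '' S
      · obtain ⟨a, ha, rfl⟩ := hv
        obtain ⟨b, hb, rfl⟩ := hw
        rw [hf a ha, hf b hb]
        rcases hE a ha b hb hvw with rfl | hab
        · exact Commute.refl _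
        · exact commute_gen hab
      · rw [hf_one w hw]
        exact Commute.one_right _
    · rw [hf_one v hv]
      exact Commute.one_left _
  exact ⟨lift f hpow hcomm, fun a ha => (lift_gen f hpow hcomm _).trans (hf a ha)⟩

end GraphProd

section Restriction

variable {m n : ℕ} {x y : ℕ → ℕ} {E : (ℕ → ℕ) → (ℕ → ℕ) → Prop}

theorem res_eq_res_iff : res n x = res n y ↔ ∀ i < n, x i = y i := by
  simp only [res, funext_iff, Fin.forall_iff]

theorem res_eq_res_of_le (hmn : m ≤ n) (h : res n x = res n y) : res m x = res m y :=
  res_eq_res_iff.mpr fun i hi => res_eq_res_iff.mp h i (hi.trans_le hmn)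

theorem eventually_res_ne (h : x ≠ y) : ∀ᶠ n in atTop, res n x ≠ res n y := by
  obtain ⟨i, hi⟩ := Function.ne_iff.mp h
  filter_upwards [eventually_gt_atTop i] with n hn hxy
  exact hi (res_eq_res_iff.mp hxy i hn)

theorem tendsto_of_res_eq {u : ℕ → ℕ → ℕ} (h : ∀ n, res n (u n) = res n x) :
    Tendsto u atTop (𝓝 x) := by
  refine tendsto_pi_nhds.mpr fun i => tendsto_const_nhds.congr' ?_
  filter_upwards [eventually_gt_atTop i] with n hn
  exact (res_eq_res_iff.mp (h n) i hn).symm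

theorem En_res_of_le (hmn : m ≤ n) (h : En E n (res n x) (res n y)) :
    En E m (res m x) (res m y) := by
  obtain ⟨x', y', hE, hx', hy'⟩ := h
  exact ⟨x', y', hE, res_eq_res_of_le hmn hx', res_eq_res_of_le hmn hy'⟩

theorem eventually_not_En_res (hE : IsClosed {q : (ℕ → ℕ) × (ℕ → ℕ) | E q.1 q.2}) (h : ¬ E x y) :
    ∀ᶠ n in atTop, ¬ En E n (res n x) (res n y) := by
  by_contra hfreq
  have hall : ∀ n, En E n (res n x) (res n y) := fun n => by
    obtain ⟨k, hnk, hk⟩ := (not_eventually.mp hfreq).forall_exists_of_atTop n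
    exact En_res_of_le hnk (not_not.mp hk)
  choose x' y' hE' hx' hy' using hall
  exact h (hE.mem_of_tendsto ((tendsto_of_res_eq hx').prodMk_nhds (tendsto_of_res_eq hy'))
    (Eventually.of_forall hE'))

theorem eventually_res_injOn_and_reflects_En (hE : IsClosed {q : (ℕ → ℕ) × (ℕ → ℕ) | E q.1 q.2})
    {S : Set (ℕ → ℕ)} (hS : S.Finite) :
    ∀ᶠ n in atTop, S.InjOn (res n) ∧
      ∀ a ∈ S, ∀ b ∈ S, En E n (res n a) (res n b) → a = b ∨ E a b := by
  have hpair : ∀ a b, ∀ᶠ n in atTop, (res n a = res n b → a = b) ∧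
      (En E n (res n a) (res n b) → a = b ∨ E a b) := by
    intro a b
    by_cases hab : a = b
    · exact Eventually.of_forall fun _ => ⟨fun _ => hab, fun _ => Or.inl hab⟩
    by_cases hEab : E a b
    · filter_upwards [eventually_res_ne hab] with n hn
      exact ⟨fun h => absurd h hn, fun _ => Or.inr hEab⟩
    · filter_upwards [eventually_res_ne hab, eventually_not_En_res hE hEab] with n hn hEn
      exact ⟨fun h => absurd h hn, fun h => absurd h hEn⟩
  have hall := hS.eventually_all.mpr fun a _ => hS.eventually_all.mpr fun b _ => hpair a b
  filter_upwards [hall] with n hn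
  exact ⟨fun a ha b hb => (hn a ha b hb).1, fun a ha b hb => (hn a ha b hb).2⟩

theorem pn_res {p : (ℕ → ℕ) → ℕ} (hdep : ∀ η ν : ℕ → ℕ, η 0 = ν 0 → p η = p ν)
    (hn : 0 < n) (x : ℕ → ℕ) : pn p n (res n x) = p x :=
  hdep _ _ (dif_pos hn)

end Restriction

theorem restriction_homs_separate_points_general
    (E : (ℕ → ℕ) → (ℕ → ℕ) → Prop)
    (hEclosed : IsClosed {q : (ℕ → ℕ) × (ℕ → ℕ) | E q.1 q.2})
    (p : (ℕ → ℕ) → ℕ)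
    (hdep : ∀ η ν : ℕ → ℕ, η 0 = ν 0 → p η = p ν)
    (π : ∀ n : ℕ, GraphProd E p →* GraphProd (En E n) (pn p n))
    (hπ : ∀ n : ℕ, 0 < n → ∀ η : ℕ → ℕ,
      π n (GraphProd.gen E p η) = GraphProd.gen (En E n) (pn p n) (res n η)) :
    (∀ g : GraphProd E p, g ≠ 1 → ∃ n : ℕ, 0 < n ∧ π n g ≠ 1) ∧
    (⨅ (n : ℕ) (_ : 0 < n), (π n).ker) = ⊥ := by
  have separates : ∀ g : GraphProd E p, g ≠ 1 → ∃ n : ℕ, 0 < n ∧ π n g ≠ 1 := by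
    intro g hg
    obtain ⟨S, hS, hgS⟩ := GraphProd.exists_finite_mem_closure_gen g
    obtain ⟨n, ⟨hinj, hEn⟩, hn⟩ :=
      ((eventually_res_injOn_and_reflects_En hEclosed hS).and (eventually_gt_atTop 0)).exists
    obtain ⟨ψ, hψ⟩ := GraphProd.exists_retraction (res n) hinj (fun a _ => pn_res hdep hn a) hEn
    have hfix : ψ.comp (π n) g = g := by
      refine MonoidHom.eqOn_closure (g := MonoidHom.id _) ?_ hgS
      rintro _ ⟨a, ha, rfl⟩
      rw [MonoidHom.comp_apply, hπ n hn, hψ a ha, MonoidHom.id_apply]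
    refine ⟨n, hn, fun h => hg ?_⟩
    rw [← hfix, MonoidHom.comp_apply, h, map_one]
  refine ⟨separates, (Subgroup.eq_bot_iff_forall _).mpr fun g hg => ?_⟩
  by_contra hne
  obtain ⟨n, hn, hπg⟩ := separates g hne
  exact hπg (Subgroup.mem_iInf.mp (Subgroup.mem_iInf.mp hg n) hn)

/-- The restriction homomorphisms `π_n : G(Γ, 𝔭) → G_n` (`0 < n < ω`) jointly
separate points: every `g ≠ e` has `π_n(g) ≠ e` for some `0 < n`; equivalently
`⋂_{0 < n} ker π_n = {e}`. -/
theorem restriction_homs_separate_points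
    (E : (ℕ → ℕ) → (ℕ → ℕ) → Prop) (hEsym : Symmetric E)
    (hEclosed : IsClosed {q : (ℕ → ℕ) × (ℕ → ℕ) | E q.1 q.2})
    (p : (ℕ → ℕ) → ℕ) (hp : ∀ η, p η ≠ 0 → IsPrimePow (p η))
    (hdep : ∀ η ν : ℕ → ℕ, η 0 = ν 0 → p η = p ν)
    (π : ∀ n : ℕ, GraphProd E p →* GraphProd (En E n) (pn p n))
    (hπ : ∀ n : ℕ, 0 < n → ∀ η : ℕ → ℕ,
      π n (GraphProd.gen E p η) = GraphProd.gen (En E n) (pn p n) (res n η)) :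
    (∀ g : GraphProd E p, g ≠ 1 → ∃ n : ℕ, 0 < n ∧ π n g ≠ 1) ∧
    (⨅ (n : ℕ) (_ : 0 < n), (π n).ker) = ⊥ :=
  restriction_homs_separate_points_general E hEclosed p hdep π hπ
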